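/- arXiv:2208.07353 — 6 statements merged into one kernel-verified Lean document; each statement's English description precedes it below -/
import Mathlib

section
/- Let D = {β_1, …, β_m} be a multiset of m points in ℝ^d and let 1 ≤ i ≤ m/2. Then the Lebesgue volume of the region of approximate Tukey depth at least i satisfies V_{i,D} = ∏_{j=1}^d (S_{j,m−i+1} − S_{j,i}). -/
open MeasureTheory

/-- The one-dimensional depth of `y` in dimension `j` with respect to `D`. -/
noncomputable def depth1 {d : ℕ} (D : Multiset (Fin d → ℝ)) (j : Fin d) (y : Fin d → ℝ) : ℕ :=
  min (Multiset.countP (fun x => x j ≤ y j) D) (Multiset.countP (fun x => y j ≤ x j) D)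

/-- The approximate Tukey depth of `y` with respect to `D`: the minimum over the `d`
canonical dimensions of the one-dimensional depths. -/
noncomputable def approxTukeyDepth {d : ℕ} (D : Multiset (Fin d → ℝ)) (y : Fin d → ℝ) : ℕ :=
  sInf {n : ℕ | ∃ j : Fin d, n = depth1 D j y}

lemma countP_range_eq_card {m : ℕ} (p : ℕ → Prop) [DecidablePred p] :
    Multiset.countP p (Multiset.range m) = ((Finset.range m).filter p).card := by
  rw [Multiset.countP_eq_card_filter]
  rfl

lemma countP_le_iff {m i : ℕ} (hi : 1 ≤ i) (him : i ≤ m) (g : ℕ → ℝ)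
    (hmono : ∀ a b : ℕ, 1 ≤ a → a ≤ b → b ≤ m → g a ≤ g b) (t : ℝ) :
    i ≤ Multiset.countP (fun k => g (k + 1) ≤ t) (Multiset.range m) ↔ g i ≤ t := by
  rw [countP_range_eq_card]
  constructor
  · intro h
    by_contra ht
    have hsub : (Finset.range m).filter (fun k => g (k + 1) ≤ t) ⊆ Finset.range (i - 1) := by
      intro k hk
      simp only [Finset.mem_filter, Finset.mem_range] at hk ⊢
      by_contra hki
      exact ht (le_trans (hmono i (k + 1) hi (by omega) (by omega)) hk.2)
    have := Finset.card_le_card hsub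
    rw [Finset.card_range] at this
    omega
  · intro h
    have hsub : Finset.range i ⊆ (Finset.range m).filter (fun k => g (k + 1) ≤ t) := by
      intro k hk
      simp only [Finset.mem_range] at hk
      simp only [Finset.mem_filter, Finset.mem_range]
      exact ⟨by omega, le_trans (hmono (k + 1) i (by omega) (by omega) him) h⟩
    have := Finset.card_le_card hsub
    rwa [Finset.card_range] at this

lemma countP_ge_iff {m i : ℕ} (hi : 1 ≤ i) (him : i ≤ m) (g : ℕ → ℝ)
    (hmono : ∀ a b : ℕ, 1 ≤ a → a ≤ b → b ≤ m → g a ≤ g b) (t : ℝ) :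
    i ≤ Multiset.countP (fun k => t ≤ g (k + 1)) (Multiset.range m) ↔ t ≤ g (m - i + 1) := by
  rw [countP_range_eq_card]
  constructor
  · intro h
    by_contra ht
    have hsub : (Finset.range m).filter (fun k => t ≤ g (k + 1)) ⊆ Finset.Ico (m - i + 1) m := by
      intro k hk
      simp only [Finset.mem_filter, Finset.mem_range] at hk
      simp only [Finset.mem_Ico]
      refine ⟨?_, hk.1⟩
      by_contra hki
      exact ht (le_trans hk.2 (hmono (k + 1) (m - i + 1) (by omega) (by omega) (by omega)))
    have := Finset.card_le_card hsub
    rw [Nat.card_Ico] at this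
    omega
  · intro h
    have hsub : Finset.Ico (m - i) m ⊆ (Finset.range m).filter (fun k => t ≤ g (k + 1)) := by
      intro k hk
      simp only [Finset.mem_Ico] at hk
      simp only [Finset.mem_filter, Finset.mem_range]
      exact ⟨hk.2, le_trans h (hmono (m - i + 1) (k + 1) (by omega) (by omega) (by omega))⟩
    have := Finset.card_le_card hsub
    rw [Nat.card_Ico] at this
    omega

/-- For a multiset `D` of `m` points in `ℝ^d` (with `d ≥ 1`), sorted coordinates
`S j 1 ≤ … ≤ S j m` in each dimension `j`, and `1 ≤ i ≤ m/2`, the Lebesgue volume of the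
region of approximate Tukey depth at least `i` is `∏_j (S j (m - i + 1) - S j i)`. -/
theorem volume_approxDepthRegion {d m : ℕ} (hd : 0 < d)
    (D : Multiset (Fin d → ℝ)) (S : Fin d → ℕ → ℝ)
    (hmono : ∀ j : Fin d, ∀ a b : ℕ, 1 ≤ a → a ≤ b → b ≤ m → S j a ≤ S j b)
    (hsort : ∀ j : Fin d,
      Multiset.map (fun x => x j) D = Multiset.map (fun k => S j (k + 1)) (Multiset.range m))
    (i : ℕ) (hi : 1 ≤ i) (him : 2 * i ≤ m) :
    volume {y : Fin d → ℝ | i ≤ approxTukeyDepth D y}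
      = ∏ j : Fin d, ENNReal.ofReal (S j (m - i + 1) - S j i) := by
  have him' : i ≤ m := by omega
  have hset : {y : Fin d → ℝ | i ≤ approxTukeyDepth D y}
      = Set.pi Set.univ (fun j => Set.Icc (S j i) (S j (m - i + 1))) := by
    ext y
    simp only [Set.mem_setOf_eq, Set.mem_pi, Set.mem_univ, Set.mem_Icc, forall_true_left]
    have hne : {n : ℕ | ∃ j : Fin d, n = depth1 D j y}.Nonempty :=
      ⟨depth1 D ⟨0, hd⟩ y, ⟨0, hd⟩, rfl⟩
    rw [approxTukeyDepth, le_csInf_iff (OrderBot.bddBelow _) hne]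
    have key : ∀ j : Fin d, i ≤ depth1 D j y ↔
        S j i ≤ y j ∧ y j ≤ S j (m - i + 1) := by
      intro j
      rw [depth1, le_min_iff]
      have h1 : Multiset.countP (fun x => x j ≤ y j) D
          = Multiset.countP (fun k => S j (k + 1) ≤ y j) (Multiset.range m) := by
        have := Multiset.countP_map (fun x => x j) D (fun v => v ≤ y j)
        rw [hsort j, Multiset.countP_map] at this
        rw [← Multiset.countP_eq_card_filter, ← Multiset.countP_eq_card_filter] at this
        exact this.symm
      have h2 : Multiset.countP (fun x => y j ≤ x j) D
          = Multiset.countP (fun k => y j ≤ S j (k + 1)) (Multiset.range m) := by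
        have := Multiset.countP_map (fun x => x j) D (fun v => y j ≤ v)
        rw [hsort j, Multiset.countP_map] at this
        rw [← Multiset.countP_eq_card_filter, ← Multiset.countP_eq_card_filter] at this
        exact this.symm
      rw [h1, h2, countP_le_iff hi him' (S j) (hmono j),
        countP_ge_iff hi him' (S j) (hmono j)]
    constructor
    · intro h j
      exact (key j).mp (h _ ⟨j, rfl⟩)
    · rintro h n ⟨j, rfl⟩
      exact (key j).mpr (h j)
  rw [hset, volume_pi_pi]
  exact Finset.prod_congr rfl fun j _ => Real.volume_Icc
end

section
/- Let D be a finite multiset of points in ℝ^d, let x ∈ ℝ^d, and let D' = D + {x} be the multiset obtained by adding x to D. Then for every integer p ≥ 1, the depth-region volumes satisfy V_{p+1,D} ≤ V_{p,D} ≤ V_{p,D'} ≤ V_{p−1,D}. -/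
open MeasureTheory
open scoped ENNReal

/-- `V i D`: the Lebesgue volume (in `ℝ≥0∞`, so possibly infinite for `i = 0`) of the
region of points of approximate Tukey depth at least `i` with respect to `D`. -/
noncomputable def depthVolume {d : ℕ} (i : ℕ) (D : Multiset (Fin d → ℝ)) : ℝ≥0∞ :=
  volume {y : Fin d → ℝ | i ≤ approxTukeyDepth D y}

lemma depth1_le_cons {d : ℕ} (D : Multiset (Fin d → ℝ)) (x : Fin d → ℝ) (j : Fin d)
    (y : Fin d → ℝ) : depth1 D j y ≤ depth1 (x ::ₘ D) j y := by
  unfold depth1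
  rw [Multiset.countP_cons, Multiset.countP_cons]
  exact min_le_min (Nat.le_add_right _ _) (Nat.le_add_right _ _)

lemma depth1_cons_le {d : ℕ} (D : Multiset (Fin d → ℝ)) (x : Fin d → ℝ) (j : Fin d)
    (y : Fin d → ℝ) : depth1 (x ::ₘ D) j y ≤ depth1 D j y + 1 := by
  unfold depth1
  rw [Multiset.countP_cons, Multiset.countP_cons]
  set a := Multiset.countP (fun z => z j ≤ y j) D with ha
  set b := Multiset.countP (fun z => y j ≤ z j) D with hb
  clear_value a b
  clear ha hb
  split_ifs <;> omega

lemma approxTukeyDepth_le_cons {d : ℕ} (D : Multiset (Fin d → ℝ)) (x : Fin d → ℝ)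
    (y : Fin d → ℝ) : approxTukeyDepth D y ≤ approxTukeyDepth (x ::ₘ D) y := by
  by_cases hd : Nonempty (Fin d)
  · obtain ⟨j0⟩ := hd
    have hne : {n : ℕ | ∃ j : Fin d, n = depth1 (x ::ₘ D) j y}.Nonempty := ⟨_, j0, rfl⟩
    obtain ⟨j, hj⟩ := Nat.sInf_mem hne
    calc approxTukeyDepth D y ≤ depth1 D j y := Nat.sInf_le ⟨j, rfl⟩
      _ ≤ depth1 (x ::ₘ D) j y := depth1_le_cons D x j y
      _ = approxTukeyDepth (x ::ₘ D) y := hj.symm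
  · have h1 : {n : ℕ | ∃ j : Fin d, n = depth1 D j y} = ∅ := by
      ext n; simp only [Set.mem_empty_iff_false, iff_false, Set.mem_setOf_eq]
      rintro ⟨j, -⟩; exact hd ⟨j⟩
    unfold approxTukeyDepth
    rw [h1, Nat.sInf_empty]
    exact Nat.zero_le _

lemma approxTukeyDepth_cons_le {d : ℕ} (D : Multiset (Fin d → ℝ)) (x : Fin d → ℝ)
    (y : Fin d → ℝ) : approxTukeyDepth (x ::ₘ D) y ≤ approxTukeyDepth D y + 1 := by
  by_cases hd : Nonempty (Fin d)
  · obtain ⟨j0⟩ := hd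
    have hne : {n : ℕ | ∃ j : Fin d, n = depth1 D j y}.Nonempty := ⟨_, j0, rfl⟩
    obtain ⟨j, hj⟩ := Nat.sInf_mem hne
    calc approxTukeyDepth (x ::ₘ D) y ≤ depth1 (x ::ₘ D) j y := Nat.sInf_le ⟨j, rfl⟩
      _ ≤ depth1 D j y + 1 := depth1_cons_le D x j y
      _ = approxTukeyDepth D y + 1 := by unfold approxTukeyDepth; omega
  · have h1 : {n : ℕ | ∃ j : Fin d, n = depth1 (x ::ₘ D) j y} = ∅ := by
      ext n; simp only [Set.mem_empty_iff_false, iff_false, Set.mem_setOf_eq]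
      rintro ⟨j, -⟩; exact hd ⟨j⟩
    unfold approxTukeyDepth
    rw [h1, Nat.sInf_empty]
    exact Nat.zero_le _

/-- Adding one point to `D` changes depth-region volumes in a controlled way:
`V (p+1) D ≤ V p D ≤ V p (D + {x}) ≤ V (p-1) D` for every `p ≥ 1`. -/
theorem depthVolume_add_point {d : ℕ} (D : Multiset (Fin d → ℝ)) (x : Fin d → ℝ)
    (p : ℕ) (hp : 1 ≤ p) :
    depthVolume (p + 1) D ≤ depthVolume p D ∧
    depthVolume p D ≤ depthVolume p (x ::ₘ D) ∧
    depthVolume p (x ::ₘ D) ≤ depthVolume (p - 1) D := by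
  refine ⟨?_, ?_, ?_⟩
  · exact measure_mono fun y hy => le_trans (Nat.le_succ p) hy
  · exact measure_mono fun y hy =>
      le_trans hy (approxTukeyDepth_le_cons D x y)
  · refine measure_mono fun y hy => ?_
    have := approxTukeyDepth_cons_le D x y
    simp only [Set.mem_setOf_eq] at hy ⊢
    omega
end

section
/- Let D = {β_1, …, β_m} be a multiset of m points in ℝ^d, let 1 ≤ i ≤ m/2, and let J ⊆ {1,…,d} be a set of dimensions. Then the Lebesgue volume (in ℝ^{|J|}) of the projection onto the coordinates in J of the region {y ∈ ℝ^d : T̃_D(y) ≥ i} equals ∏_{j∈J} (S_{j,m−i+1} − S_{j,i}). In particular, the length in each single dimension j of this region is V_{j,i} = S_{j,m−i+1} − S_{j,i}. -/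
open MeasureTheory
open scoped ENNReal

lemma count_left_iff (m i : ℕ) (hi : 1 ≤ i) (him : 2 * i ≤ m)
    (g : ℕ → ℝ) (hmono : ∀ a b : ℕ, 1 ≤ a → a ≤ b → b ≤ m → g a ≤ g b) (t : ℝ) :
    i ≤ (Finset.filter (fun k => g (k + 1) ≤ t) (Finset.range m)).card ↔ g i ≤ t := by
  classical
  constructor
  · intro h
    by_contra hgt
    push_neg at hgt
    have hsub : Finset.filter (fun k => g (k + 1) ≤ t) (Finset.range m) ⊆
        Finset.range (i - 1) := by
      intro k hk
      simp only [Finset.mem_filter, Finset.mem_range] at hk ⊢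
      by_contra hk2
      push_neg at hk2
      have : g i ≤ g (k + 1) := hmono i (k + 1) hi (by omega) (by omega)
      linarith [hk.2]
    have := Finset.card_le_card hsub
    rw [Finset.card_range] at this
    omega
  · intro h
    have hsub : Finset.range i ⊆ Finset.filter (fun k => g (k + 1) ≤ t) (Finset.range m) := by
      intro k hk
      simp only [Finset.mem_range] at hk
      simp only [Finset.mem_filter, Finset.mem_range]
      refine ⟨by omega, ?_⟩
      have : g (k + 1) ≤ g i := hmono (k + 1) i (by omega) (by omega) (by omega)
      linarith
    have := Finset.card_le_card hsub
    simpa [Finset.card_range] using this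

lemma count_right_iff (m i : ℕ) (hi : 1 ≤ i) (him : 2 * i ≤ m)
    (g : ℕ → ℝ) (hmono : ∀ a b : ℕ, 1 ≤ a → a ≤ b → b ≤ m → g a ≤ g b) (t : ℝ) :
    i ≤ (Finset.filter (fun k => t ≤ g (k + 1)) (Finset.range m)).card ↔ t ≤ g (m - i + 1) := by
  classical
  constructor
  · intro h
    by_contra hgt
    push_neg at hgt
    have hsub : Finset.filter (fun k => t ≤ g (k + 1)) (Finset.range m) ⊆
        Finset.Ico (m - i + 1) m := by
      intro k hk
      simp only [Finset.mem_filter, Finset.mem_range] at hk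
      simp only [Finset.mem_Ico]
      refine ⟨?_, hk.1⟩
      by_contra hk2
      push_neg at hk2
      have : g (k + 1) ≤ g (m - i + 1) :=
        hmono (k + 1) (m - i + 1) (by omega) (by omega) (by omega)
      linarith [hk.2]
    have := Finset.card_le_card hsub
    rw [Nat.card_Ico] at this
    omega
  · intro h
    have hsub : Finset.Ico (m - i) m ⊆
        Finset.filter (fun k => t ≤ g (k + 1)) (Finset.range m) := by
      intro k hk
      simp only [Finset.mem_Ico] at hk
      simp only [Finset.mem_filter, Finset.mem_range]
      refine ⟨hk.2, ?_⟩
      have : g (m - i + 1) ≤ g (k + 1) :=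
        hmono (m - i + 1) (k + 1) (by omega) (by omega) (by omega)
      linarith
    have := Finset.card_le_card hsub
    rw [Nat.card_Ico] at this
    omega

/-- For a multiset `D` of `m` points in `ℝ^d` (with `d ≥ 1`), sorted coordinates
`S j 1 ≤ … ≤ S j m`, `1 ≤ i ≤ m/2`, and any set `J` of dimensions, the Lebesgue volume
(in `ℝ^{|J|}`) of the projection onto the coordinates in `J` of the region of approximate
Tukey depth at least `i` equals `∏_{j ∈ J} (S j (m - i + 1) - S j i)`.  (Taking `J = {j}`
gives the length `V_{j,i} = S j (m - i + 1) - S j i` in each single dimension `j`.) -/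
theorem volume_projection_approxDepthRegion {d m : ℕ} (hd : 0 < d)
    (D : Multiset (Fin d → ℝ)) (S : Fin d → ℕ → ℝ)
    (hmono : ∀ j : Fin d, ∀ a b : ℕ, 1 ≤ a → a ≤ b → b ≤ m → S j a ≤ S j b)
    (hsort : ∀ j : Fin d,
      Multiset.map (fun x => x j) D = Multiset.map (fun k => S j (k + 1)) (Multiset.range m))
    (i : ℕ) (hi : 1 ≤ i) (him : 2 * i ≤ m) (J : Finset (Fin d)) :
    volume ((fun (y : Fin d → ℝ) (j : J) => y j.1) '' {y : Fin d → ℝ | i ≤ approxTukeyDepth D y})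
      = ∏ j ∈ J, ENNReal.ofReal (S j (m - i + 1) - S j i) := by
  classical
  -- Step 1: depth characterization
  have hdepth : ∀ (j : Fin d) (y : Fin d → ℝ),
      i ≤ depth1 D j y ↔ S j i ≤ y j ∧ y j ≤ S j (m - i + 1) := by
    intro j y
    have hcl : Multiset.countP (fun x => x j ≤ y j) D
        = (Finset.filter (fun k => S j (k + 1) ≤ y j) (Finset.range m)).card := by
      have h1 := Multiset.countP_map (fun x => x j) D (fun r : ℝ => r ≤ y j)
      have h2 := Multiset.countP_map (fun k => S j (k + 1)) (Multiset.range m)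
        (fun r : ℝ => r ≤ y j)
      rw [hsort j, h2] at h1
      rw [Multiset.countP_eq_card_filter, ← h1]
      rfl
    have hcr : Multiset.countP (fun x => y j ≤ x j) D
        = (Finset.filter (fun k => y j ≤ S j (k + 1)) (Finset.range m)).card := by
      have h1 := Multiset.countP_map (fun x => x j) D (fun r : ℝ => y j ≤ r)
      have h2 := Multiset.countP_map (fun k => S j (k + 1)) (Multiset.range m)
        (fun r : ℝ => y j ≤ r)
      rw [hsort j, h2] at h1
      rw [Multiset.countP_eq_card_filter, ← h1]
      rfl
    rw [depth1, le_min_iff, hcl, hcr,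
      count_left_iff m i hi him (S j) (hmono j) (y j),
      count_right_iff m i hi him (S j) (hmono j) (y j)]
  -- Step 2: region equals a box
  have hregion : {y : Fin d → ℝ | i ≤ approxTukeyDepth D y}
      = Set.pi Set.univ (fun j => Set.Icc (S j i) (S j (m - i + 1))) := by
    ext y
    simp only [Set.mem_setOf_eq, Set.mem_pi, Set.mem_univ, true_implies, Set.mem_Icc]
    constructor
    · intro h j
      have hmem : depth1 D j y ∈ {n : ℕ | ∃ j : Fin d, n = depth1 D j y} := ⟨j, rfl⟩
      have := Nat.sInf_le hmem
      exact (hdepth j y).mp (le_trans h this)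
    · intro h
      refine le_csInf ⟨_, ⟨⟨0, hd⟩, rfl⟩⟩ ?_
      rintro n ⟨j, rfl⟩
      exact (hdepth j y).mpr (h j)
  -- Step 3: the projection of the box
  have hIcc : ∀ j : Fin d, S j i ≤ S j (m - i + 1) :=
    fun j => hmono j i (m - i + 1) hi (by omega) (by omega)
  have himage : (fun (y : Fin d → ℝ) (j : J) => y j.1) ''
        {y : Fin d → ℝ | i ≤ approxTukeyDepth D y}
      = Set.pi Set.univ (fun j : J => Set.Icc (S j.1 i) (S j.1 (m - i + 1))) := by
    rw [hregion]
    ext z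
    simp only [Set.mem_image, Set.mem_pi, Set.mem_univ, true_implies]
    constructor
    · rintro ⟨y, hy, rfl⟩ j
      exact hy j.1
    · intro hz
      refine ⟨fun j => if h : j ∈ J then z ⟨j, h⟩ else S j i, fun j => ?_, ?_⟩
      · by_cases h : j ∈ J
        · simpa [h] using hz ⟨j, h⟩
        · simp only [h, dif_neg, not_false_iff]
          exact Set.mem_Icc.mpr ⟨le_refl _, hIcc j⟩
      · funext j
        simp [j.2]
  rw [himage, volume_pi_pi]
  rw [← Finset.prod_coe_sort J (fun j => ENNReal.ofReal (S j (m - i + 1) - S j i))]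
  exact Finset.prod_congr rfl fun j _ => by rw [Real.volume_Icc]
end

section
/- Let D = {β_1, …, β_m} be a multiset of m points in ℝ^d and let 1 ≤ i < m/2. For j ∈ {1,…,d} define C_{j,i} = {y ∈ ℝ^d : T_{D,j'}(y) > i for all j' < j, T_{D,j}(y) = i, and T_{D,j'}(y) ≥ i for all j' > j}, and set V_{j,i} = S_{j,m−i+1} − S_{j,i} and W_{j,i} = V_{j,i} − V_{j,i+1}. Then the Lebesgue volume of C_{j,i} equals (∏_{j'<j} V_{j',i+1}) · W_{j,i} · (∏_{j'>j} V_{j',i}). -/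
open MeasureTheory
open scoped ENNReal

/-- `C j i`: the set of points whose one-dimensional depth is `> i` in every dimension
before `j`, exactly `i` in dimension `j`, and `≥ i` in every dimension after `j`. -/
def depthCell {d : ℕ} (D : Multiset (Fin d → ℝ)) (i : ℕ) (j : Fin d) : Set (Fin d → ℝ) :=
  {y | (∀ j' : Fin d, j' < j → i < depth1 D j' y) ∧ depth1 D j y = i ∧
    (∀ j' : Fin d, j < j' → i ≤ depth1 D j' y)}

lemma count_le_iff {m : ℕ} (S : ℕ → ℝ)
    (hmono : ∀ a b : ℕ, 1 ≤ a → a ≤ b → b ≤ m → S a ≤ S b)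
    (n : ℕ) (hn : 1 ≤ n) (hnm : n ≤ m) (t : ℝ) :
    n ≤ ((Finset.range m).filter (fun k => S (k+1) ≤ t)).card ↔ S n ≤ t := by
  constructor
  · intro h
    by_contra hlt
    push_neg at hlt
    have hsub : (Finset.range m).filter (fun k => S (k+1) ≤ t) ⊆ Finset.range (n-1) := by
      intro k hk
      simp only [Finset.mem_filter, Finset.mem_range] at hk ⊢
      by_contra hk2
      push_neg at hk2
      have : S n ≤ S (k+1) := hmono n (k+1) hn (by omega) (by omega)
      linarith [hk.2]
    have := Finset.card_le_card hsub
    rw [Finset.card_range] at this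
    omega
  · intro h
    have hsub : Finset.range n ⊆ (Finset.range m).filter (fun k => S (k+1) ≤ t) := by
      intro k hk
      simp only [Finset.mem_range] at hk
      simp only [Finset.mem_filter, Finset.mem_range]
      exact ⟨lt_of_lt_of_le hk hnm,
        le_trans (hmono (k+1) n (by omega) (by omega) hnm) h⟩
    simpa using Finset.card_le_card hsub

lemma count_ge_iff {m : ℕ} (S : ℕ → ℝ)
    (hmono : ∀ a b : ℕ, 1 ≤ a → a ≤ b → b ≤ m → S a ≤ S b)
    (n : ℕ) (hn : 1 ≤ n) (hnm : n ≤ m) (t : ℝ) :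
    n ≤ ((Finset.range m).filter (fun k => t ≤ S (k+1))).card ↔ t ≤ S (m - n + 1) := by
  constructor
  · intro h
    by_contra hlt
    push_neg at hlt
    have hsub : (Finset.range m).filter (fun k => t ≤ S (k+1)) ⊆ Finset.Ico (m - n + 1) m := by
      intro k hk
      simp only [Finset.mem_filter, Finset.mem_range] at hk
      simp only [Finset.mem_Ico]
      refine ⟨?_, hk.1⟩
      by_contra hk2
      push_neg at hk2
      have : S (k+1) ≤ S (m - n + 1) := hmono _ _ (by omega) (by omega) (by omega)
      linarith [hk.2]
    have := Finset.card_le_card hsub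
    rw [Nat.card_Ico] at this
    omega
  · intro h
    have hsub : Finset.Ico (m - n) m ⊆ (Finset.range m).filter (fun k => t ≤ S (k+1)) := by
      intro k hk
      simp only [Finset.mem_Ico] at hk
      simp only [Finset.mem_filter, Finset.mem_range]
      exact ⟨hk.2, le_trans h (hmono _ _ (by omega) (by omega) (by omega))⟩
    have := Finset.card_le_card hsub
    rw [Nat.card_Ico] at this
    omega

lemma depth_ge_iff {d m : ℕ} (D : Multiset (Fin d → ℝ)) (S : Fin d → ℕ → ℝ)
    (hmono : ∀ j : Fin d, ∀ a b : ℕ, 1 ≤ a → a ≤ b → b ≤ m → S j a ≤ S j b)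
    (hsort : ∀ j : Fin d,
      Multiset.map (fun x => x j) D = Multiset.map (fun k => S j (k + 1)) (Multiset.range m))
    (j : Fin d) (n : ℕ) (hn : 1 ≤ n) (hnm : n ≤ m) (y : Fin d → ℝ) :
    n ≤ depth1 D j y ↔ y j ∈ Set.Icc (S j n) (S j (m - n + 1)) := by
  classical
  have h1 : Multiset.countP (fun x => x j ≤ y j) D
      = ((Finset.range m).filter (fun k => S j (k+1) ≤ y j)).card := by
    have e1 := Multiset.countP_map (fun x => x j) D (fun r => r ≤ y j)
    rw [hsort j, Multiset.countP_map] at e1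
    rw [Multiset.countP_eq_card_filter, ← e1]
    simp [Finset.card, Finset.filter_val, Finset.range_val]
  have h2 : Multiset.countP (fun x => y j ≤ x j) D
      = ((Finset.range m).filter (fun k => y j ≤ S j (k+1))).card := by
    have e1 := Multiset.countP_map (fun x => x j) D (fun r => y j ≤ r)
    rw [hsort j, Multiset.countP_map] at e1
    rw [Multiset.countP_eq_card_filter, ← e1]
    simp [Finset.card, Finset.filter_val, Finset.range_val]
  rw [depth1, le_min_iff, h1, h2, count_le_iff (S j) (hmono j) n hn hnm,
    count_ge_iff (S j) (hmono j) n hn hnm, Set.mem_Icc]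

/-- For a multiset `D` of `m` points in `ℝ^d` (with `d ≥ 1`), sorted coordinates
`S j 1 ≤ … ≤ S j m`, and `1 ≤ i < m/2`, setting `V j i = S j (m - i + 1) - S j i` and
`W j i = V j i - V j (i+1)`, the Lebesgue volume of the cell `C j i` equals
`(∏_{j' < j} V j' (i+1)) · W j i · (∏_{j' > j} V j' i)`. -/
theorem volume_depthCell {d m : ℕ} (hd : 0 < d)
    (D : Multiset (Fin d → ℝ)) (S : Fin d → ℕ → ℝ)
    (hmono : ∀ j : Fin d, ∀ a b : ℕ, 1 ≤ a → a ≤ b → b ≤ m → S j a ≤ S j b)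
    (hsort : ∀ j : Fin d,
      Multiset.map (fun x => x j) D = Multiset.map (fun k => S j (k + 1)) (Multiset.range m))
    (i : ℕ) (hi : 1 ≤ i) (him : 2 * (i + 1) ≤ m)
    (V W : Fin d → ℕ → ℝ)
    (hV : ∀ (j : Fin d) (i' : ℕ), V j i' = S j (m - i' + 1) - S j i')
    (hW : ∀ (j : Fin d) (i' : ℕ), W j i' = V j i' - V j (i' + 1))
    (j : Fin d) :
    volume (depthCell D i j)
      = ENNReal.ofReal
          ((∏ j' ∈ Finset.univ.filter (fun j' : Fin d => j' < j), V j' (i + 1))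
            * W j i * (∏ j' ∈ Finset.univ.filter (fun j' : Fin d => j < j'), V j' i)) := by
  classical
  set A : Fin d → Set ℝ := fun j' => Set.Icc (S j' (i+1)) (S j' (m-i)) with hAdef
  set B : Fin d → Set ℝ := fun j' => Set.Icc (S j' i) (S j' (m-i+1)) with hBdef
  have hA : ∀ (j' : Fin d) (y : Fin d → ℝ), (i < depth1 D j' y ↔ y j' ∈ A j') := by
    intro j' y
    have h := depth_ge_iff D S hmono hsort j' (i+1) (by omega) (by omega) y
    rw [show m - (i+1) + 1 = m - i from by omega] at h
    rw [hAdef]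
    rw [Nat.lt_iff_add_one_le]
    exact h
  have hB : ∀ (j' : Fin d) (y : Fin d → ℝ), (i ≤ depth1 D j' y ↔ y j' ∈ B j') :=
    fun j' y => depth_ge_iff D S hmono hsort j' i hi (by omega) y
  have hEq : ∀ y : Fin d → ℝ, (depth1 D j y = i ↔ y j ∈ B j \ A j) := by
    intro y
    rw [Set.mem_diff, ← hB j y, ← hA j y]
    omega
  have hcell : depthCell D i j
      = Set.univ.pi (fun j' => if j' < j then A j' else if j' = j then B j' \ A j' else B j') := by
    ext y
    simp only [depthCell, Set.mem_setOf_eq, Set.mem_pi, Set.mem_univ, true_implies]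
    constructor
    · rintro ⟨h1, h2, h3⟩ j'
      rcases lt_trichotomy j' j with h | h | h
      · rw [if_pos h]; exact (hA j' y).mp (h1 j' h)
      · rw [if_neg (by simp [h]), if_pos h]; subst h; exact (hEq y).mp h2
      · rw [if_neg (lt_asymm h), if_neg (ne_of_gt h)]; exact (hB j' y).mp (h3 j' h)
    · intro h
      refine ⟨fun j' hj' => ?_, ?_, fun j' hj' => ?_⟩
      · have := h j'; rw [if_pos hj'] at this; exact (hA j' y).mpr this
      · have := h j; rw [if_neg (lt_irrefl j), if_pos rfl] at this; exact (hEq y).mpr this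
      · have := h j'; rw [if_neg (lt_asymm hj'), if_neg (ne_of_gt hj')] at this
        exact (hB j' y).mpr this
  -- volumes of the pieces
  have hVA : ∀ j' : Fin d, volume (A j') = ENNReal.ofReal (V j' (i+1)) := by
    intro j'
    rw [hAdef, Real.volume_Icc, hV, show m - (i+1) + 1 = m - i from by omega]
  have hVB : ∀ j' : Fin d, volume (B j') = ENNReal.ofReal (V j' i) := by
    intro j'
    rw [hBdef, Real.volume_Icc, hV]
  have hVAnn : ∀ j' : Fin d, 0 ≤ V j' (i+1) := by
    intro j'
    rw [hV, show m - (i+1) + 1 = m - i from by omega]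
    have := hmono j' (i+1) (m-i) (by omega) (by omega) (by omega)
    linarith
  have hVBnn : ∀ j' : Fin d, 0 ≤ V j' i := by
    intro j'
    rw [hV]
    have := hmono j' i (m-i+1) hi (by omega) (by omega)
    linarith
  have hsubAB : ∀ j' : Fin d, A j' ⊆ B j' := by
    intro j'
    exact Set.Icc_subset_Icc (hmono j' i (i+1) hi (by omega) (by omega))
      (hmono j' (m-i) (m-i+1) (by omega) (by omega) (by omega))
  have hWnn : 0 ≤ W j i := by
    rw [hW, hV, hV, show m - (i+1) + 1 = m - i from by omega]
    have h1 := hmono j i (i+1) hi (by omega) (by omega)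
    have h2 := hmono j (m-i) (m-i+1) (by omega) (by omega) (by omega)
    linarith
  have hdiff : volume (B j \ A j) = ENNReal.ofReal (W j i) := by
    rw [measure_diff (hsubAB j) measurableSet_Icc.nullMeasurableSet
        (by rw [hVA]; exact ENNReal.ofReal_ne_top),
      hVA, hVB, ← ENNReal.ofReal_sub _ (hVAnn j), hW]
  rw [hcell, volume_pi_pi]
  -- split the product
  rw [← Finset.prod_filter_mul_prod_filter_not Finset.univ (fun j' : Fin d => j' < j)]
  have hsplit : Finset.univ.filter (fun j' : Fin d => ¬ j' < j)
      = insert j (Finset.univ.filter (fun j' : Fin d => j < j')) := by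
    ext x
    simp only [Finset.mem_filter, Finset.mem_univ, true_and, Finset.mem_insert, not_lt]
    constructor
    · intro h
      rcases eq_or_lt_of_le h with h | h
      · exact Or.inl h.symm
      · exact Or.inr h
    · rintro (rfl | h)
      · exact le_refl _
      · exact le_of_lt h
  rw [hsplit, Finset.prod_insert (by simp)]
  have e1 : ∏ j' ∈ Finset.univ.filter (fun j' : Fin d => j' < j),
      volume (if j' < j then A j' else if j' = j then B j' \ A j' else B j')
      = ∏ j' ∈ Finset.univ.filter (fun j' : Fin d => j' < j), ENNReal.ofReal (V j' (i+1)) := by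
    apply Finset.prod_congr rfl
    intro x hx
    simp only [Finset.mem_filter] at hx
    rw [if_pos hx.2, hVA]
  have e2 : ∏ j' ∈ Finset.univ.filter (fun j' : Fin d => j < j'),
      volume (if j' < j then A j' else if j' = j then B j' \ A j' else B j')
      = ∏ j' ∈ Finset.univ.filter (fun j' : Fin d => j < j'), ENNReal.ofReal (V j' i) := by
    apply Finset.prod_congr rfl
    intro x hx
    simp only [Finset.mem_filter] at hx
    rw [if_neg (lt_asymm hx.2), if_neg (ne_of_gt hx.2), hVB]
  rw [e1, e2, if_neg (lt_irrefl j), if_pos rfl, hdiff]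
  rw [ENNReal.ofReal_mul (mul_nonneg (Finset.prod_nonneg fun x _ => hVAnn x) hWnn),
    ENNReal.ofReal_mul (Finset.prod_nonneg fun x _ => hVAnn x),
    ENNReal.ofReal_prod_of_nonneg (fun x _ => hVAnn x),
    ENNReal.ofReal_prod_of_nonneg (fun x _ => hVBnn x)]
  ring
end

section
/- The exponential mechanism with a monotonic utility function and the factor 2 removed is ε-differentially private: let Y be a nonempty finite set, and let u be a utility function mapping (finite multiset of records, element of Y) pairs to reals with sensitivity Δ_u > 0 (i.e., |u(D + {x}, y) − u(D, y)| ≤ Δ_u for all D, x, y) which is monotonic, meaning that whenever D₁ is a sub-multiset of D₂, u(D₁, y) ≤ u(D₂, y) for every y ∈ Y. For each multiset D define the probability mass function p_D(y) = exp(ε·u(D,y)/Δ_u) / Σ_{y'∈Y} exp(ε·u(D,y')/Δ_u). Then for every multiset D, record x, and subset S ⊆ Y, letting D' = D + {x}, we have Σ_{y∈S} p_D(y) ≤ e^ε · Σ_{y∈S} p_{D'}(y) and Σ_{y∈S} p_{D'}(y) ≤ e^ε · Σ_{y∈S} p_D(y). -/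
/-- The probability that the exponential mechanism with the factor 2 removed (valid for
monotonic utility functions), privacy parameter `ε`, utility function `u` of sensitivity
`Δ`, and finite output set `Y` outputs `y` on database `D`. -/
noncomputable def monoExpMechProb {X Y : Type*} [Fintype Y] (ε Δ : ℝ) (u : Multiset X → Y → ℝ)
    (D : Multiset X) (y : Y) : ℝ :=
  Real.exp (ε * u D y / Δ) / ∑ y' : Y, Real.exp (ε * u D y' / Δ)

/-- The exponential mechanism with a monotonic utility function and the factor 2 removed
is `ε`-differentially private (add-remove model). -/
theorem monoExpMech_dp {X Y : Type*} [Fintype Y] [Nonempty Y] (ε Δ : ℝ) (hε : 0 < ε)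
    (hΔ : 0 < Δ) (u : Multiset X → Y → ℝ)
    (hsens : ∀ (D : Multiset X) (x : X) (y : Y), |u (x ::ₘ D) y - u D y| ≤ Δ)
    (hmono : ∀ (D₁ D₂ : Multiset X), D₁ ≤ D₂ → ∀ y : Y, u D₁ y ≤ u D₂ y)
    (D : Multiset X) (x : X) (S : Finset Y) :
    (∑ y ∈ S, monoExpMechProb ε Δ u D y)
        ≤ Real.exp ε * ∑ y ∈ S, monoExpMechProb ε Δ u (x ::ₘ D) y ∧
    (∑ y ∈ S, monoExpMechProb ε Δ u (x ::ₘ D) y)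
        ≤ Real.exp ε * ∑ y ∈ S, monoExpMechProb ε Δ u D y := by
  set D' := x ::ₘ D with hD'
  -- key pointwise facts on exponents
  have hle : ∀ y : Y, u D y ≤ u D' y := fun y =>
    hmono D D' (Multiset.le_cons_self D x) y
  have hub : ∀ y : Y, u D' y ≤ u D y + Δ := by
    intro y
    have := abs_le.mp (hsens D x y)
    linarith [this.2]
  have hexp_le : ∀ y : Y, Real.exp (ε * u D y / Δ) ≤ Real.exp (ε * u D' y / Δ) := by
    intro y
    apply Real.exp_le_exp.mpr
    apply div_le_div_of_nonneg_right _ hΔ.le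
    exact mul_le_mul_of_nonneg_left (hle y) hε.le
  have hexp_ub : ∀ y : Y,
      Real.exp (ε * u D' y / Δ) ≤ Real.exp ε * Real.exp (ε * u D y / Δ) := by
    intro y
    rw [← Real.exp_add]
    apply Real.exp_le_exp.mpr
    have : ε * u D' y ≤ ε * (u D y + Δ) := mul_le_mul_of_nonneg_left (hub y) hε.le
    have h2 : ε * u D' y / Δ ≤ ε * (u D y + Δ) / Δ := div_le_div_of_nonneg_right this hΔ.le
    calc ε * u D' y / Δ ≤ ε * (u D y + Δ) / Δ := h2
      _ = ε + ε * u D y / Δ := by field_simp; ring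
  set A := ∑ y' : Y, Real.exp (ε * u D y' / Δ) with hA
  set B := ∑ y' : Y, Real.exp (ε * u D' y' / Δ) with hB
  have hApos : 0 < A := Finset.sum_pos (fun y _ => Real.exp_pos _) Finset.univ_nonempty
  have hBpos : 0 < B := Finset.sum_pos (fun y _ => Real.exp_pos _) Finset.univ_nonempty
  have hAB : A ≤ B := Finset.sum_le_sum fun y _ => hexp_le y
  have hBA : B ≤ Real.exp ε * A := by
    rw [Finset.mul_sum]
    exact Finset.sum_le_sum fun y _ => hexp_ub y
  constructor
  · rw [Finset.mul_sum]
    apply Finset.sum_le_sum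
    intro y _
    unfold monoExpMechProb
    rw [← hA, ← hB, div_le_iff₀ hApos, mul_comm (Real.exp ε), mul_assoc,
      div_mul_eq_mul_div, le_div_iff₀ hBpos]
    exact mul_le_mul (hexp_le y) hBA hBpos.le (Real.exp_pos _).le
  · rw [Finset.mul_sum]
    apply Finset.sum_le_sum
    intro y _
    unfold monoExpMechProb
    rw [← hA, ← hB, div_le_iff₀ hBpos, mul_comm (Real.exp ε), mul_assoc,
      div_mul_eq_mul_div, le_div_iff₀ hApos]
    calc Real.exp (ε * u D' y / Δ) * A ≤ (Real.exp ε * Real.exp (ε * u D y / Δ)) * B :=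
          mul_le_mul (hexp_ub y) hAB hApos.le (by positivity)
      _ = Real.exp (ε * u D y / Δ) * (Real.exp ε * B) := by ring
end

section
/- The Laplace-noised threshold test on a 1-sensitive statistic is ε-differentially private: let ε > 0, let f map finite multisets of records to ℝ with the property that |f(D + {x}) − f(D)| ≤ 1 for every multiset D and record x, and let L be a random variable with the Laplace distribution of scale 1/ε, i.e., with density (ε/2)·exp(−ε|t|) with respect to Lebesgue measure on ℝ. For a fixed threshold τ ∈ ℝ and multiset D, let P(D) = Pr[f(D) + L ≥ τ]. Then for every multiset D and record x, letting D' = D + {x}, both P(D) ≤ e^ε · P(D') and 1 − P(D) ≤ e^ε · (1 − P(D')), and symmetrically with D and D' exchanged. -/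
/-!
Shifting the argument of the Laplace density `(ε/2)·e^{-ε|t|}` by `d` changes it by a factor at
most `e^{ε|d|}`, by the triangle inequality; integrating, the Laplace measure of any set is at
most `e^{ε|d|}` times that of its translate. The pass event `f(D) + L ≥ τ` is the ray
`L ≥ τ - f(D)` and the fail event its complement, and for neighbouring databases the two rays
differ by a translation of length `|f(D') - f(D)| ≤ 1`.
-/

open MeasureTheory
open scoped ENNReal

/-- The Laplace distribution with scale `1/ε`: the measure on `ℝ` with density
`t ↦ (ε/2)·exp(−ε·|t|)` with respect to Lebesgue measure. -/
noncomputable def laplaceMeasure (ε : ℝ) : Measure ℝ :=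
  volume.withDensity fun t => ENNReal.ofReal (ε / 2 * Real.exp (-ε * |t|))

/-- `Pr[f(D) + L ≥ τ]` where `L` is Laplace noise of scale `1/ε`. -/
noncomputable def noisyThresholdProb {X : Type*} (ε : ℝ) (f : Multiset X → ℝ) (τ : ℝ)
    (D : Multiset X) : ℝ≥0∞ :=
  laplaceMeasure ε {t : ℝ | τ ≤ f D + t}

open Real Set

theorem integral_exp_neg_mul_abs {ε : ℝ} (hε : 0 < ε) :
    ∫ t : ℝ, exp (-ε * |t|) = 2 / ε := by
  have half : ∫ x in Ioi (0 : ℝ), exp (-ε * x) = ε⁻¹ := by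
    simpa [rpow_neg_one, one_add_one_eq_two, Gamma_two] using
      integral_exp_neg_mul_rpow (p := 1) one_pos hε
  rw [integral_comp_abs (f := fun x => exp (-ε * x)), half, div_eq_mul_inv]

theorem integrable_exp_neg_mul_abs {ε : ℝ} (hε : 0 < ε) :
    Integrable fun t : ℝ => exp (-ε * |t|) :=
  Integrable.of_integral_ne_zero (by rw [integral_exp_neg_mul_abs hε]; positivity)

theorem isProbabilityMeasure_laplaceMeasure {ε : ℝ} (hε : 0 < ε) :
    IsProbabilityMeasure (laplaceMeasure ε) := by
  constructor
  rw [laplaceMeasure, withDensity_apply _ MeasurableSet.univ, Measure.restrict_univ,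
    ← ofReal_integral_eq_lintegral_ofReal ((integrable_exp_neg_mul_abs hε).const_mul _)
      (Filter.Eventually.of_forall fun t => by positivity),
    integral_const_mul, integral_exp_neg_mul_abs hε, ENNReal.ofReal_eq_one]
  field_simp

theorem exp_neg_mul_abs_add_le {ε : ℝ} (hε : 0 ≤ ε) (t d : ℝ) :
    exp (-ε * |t + d|) ≤ exp (ε * |d|) * exp (-ε * |t|) := by
  rw [← exp_add, exp_le_exp]
  have h : |t| ≤ |t + d| + |d| := by simpa using abs_sub (t + d) d
  nlinarith [mul_le_mul_of_nonneg_left h hε]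

theorem laplaceMeasure_le_exp_mul_preimage_add {ε : ℝ} (hε : 0 ≤ ε) (d : ℝ) (A : Set ℝ) :
    laplaceMeasure ε A
      ≤ ENNReal.ofReal (exp (ε * |d|)) * laplaceMeasure ε ((· + d) ⁻¹' A) := by
  set g : ℝ → ℝ≥0∞ := fun t => ENNReal.ofReal (ε / 2 * exp (-ε * |t|))
  have hg : ∀ t, g (t + d) ≤ ENNReal.ofReal (exp (ε * |d|)) * g t := fun t => by
    rw [← ENNReal.ofReal_mul (exp_pos _).le, mul_left_comm]
    exact ENNReal.ofReal_le_ofReal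
      (mul_le_mul_of_nonneg_left (exp_neg_mul_abs_add_le hε t d) (by positivity))
  calc laplaceMeasure ε A = ∫⁻ t in (· + d) ⁻¹' A, g (t + d) := by
        rw [laplaceMeasure, withDensity_apply',
          (measurePreserving_add_right volume d).setLIntegral_comp_preimage_emb
            (measurableEmbedding_addRight d)]
    _ ≤ ∫⁻ t in (· + d) ⁻¹' A, ENNReal.ofReal (exp (ε * |d|)) * g t := lintegral_mono hg
    _ = _ := by rw [lintegral_const_mul' _ _ ENNReal.ofReal_ne_top, laplaceMeasure,
          withDensity_apply']

theorem laplaceMeasure_Ici_le {ε : ℝ} (hε : 0 ≤ ε) (a b : ℝ) :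
    laplaceMeasure ε (Ici a)
      ≤ ENNReal.ofReal (exp (ε * |a - b|)) * laplaceMeasure ε (Ici b) := by
  simpa using laplaceMeasure_le_exp_mul_preimage_add hε (a - b) (Ici a)

theorem laplaceMeasure_Iio_le {ε : ℝ} (hε : 0 ≤ ε) (a b : ℝ) :
    laplaceMeasure ε (Iio a)
      ≤ ENNReal.ofReal (exp (ε * |a - b|)) * laplaceMeasure ε (Iio b) := by
  simpa using laplaceMeasure_le_exp_mul_preimage_add hε (a - b) (Iio a)

section NoisyThreshold

variable {X : Type*} {ε : ℝ} (f : Multiset X → ℝ) (τ : ℝ)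

theorem noisyThresholdProb_eq (D : Multiset X) :
    noisyThresholdProb ε f τ D = laplaceMeasure ε (Ici (τ - f D)) := by
  simp only [noisyThresholdProb, Ici, sub_le_iff_le_add']

theorem one_sub_noisyThresholdProb (hε : 0 < ε) (D : Multiset X) :
    1 - noisyThresholdProb ε f τ D = laplaceMeasure ε (Iio (τ - f D)) := by
  have := isProbabilityMeasure_laplaceMeasure hε
  rw [noisyThresholdProb_eq, ← prob_compl_eq_one_sub measurableSet_Ici, compl_Ici]

theorem noisyThreshold_dp_of_abs_sub_le (hε : 0 < ε) {D D' : Multiset X}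
    (hD : |f D' - f D| ≤ 1) :
    noisyThresholdProb ε f τ D ≤ ENNReal.ofReal (exp ε) * noisyThresholdProb ε f τ D' ∧
    1 - noisyThresholdProb ε f τ D
      ≤ ENNReal.ofReal (exp ε) * (1 - noisyThresholdProb ε f τ D') := by
  have hshift : τ - f D - (τ - f D') = f D' - f D := by ring
  have hfactor :
      ENNReal.ofReal (exp (ε * |τ - f D - (τ - f D')|)) ≤ ENNReal.ofReal (exp ε) := by
    rw [hshift]
    exact ENNReal.ofReal_le_ofReal (exp_le_exp.2 (mul_le_of_le_one_right hε.le hD))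
  rw [one_sub_noisyThresholdProb f τ hε, one_sub_noisyThresholdProb f τ hε,
    noisyThresholdProb_eq, noisyThresholdProb_eq]
  exact ⟨(laplaceMeasure_Ici_le hε.le _ _).trans (mul_le_mul_left hfactor _),
    (laplaceMeasure_Iio_le hε.le _ _).trans (mul_le_mul_left hfactor _)⟩

end NoisyThreshold

/-- The Laplace-noised threshold test on a 1-sensitive statistic is `ε`-differentially
private (add-remove model): both the pass probability and the fail probability change by
at most a factor `e^ε` between neighboring databases, in both directions. -/
theorem noisyThreshold_dp {X : Type*} (ε : ℝ) (hε : 0 < ε) (f : Multiset X → ℝ)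
    (hf : ∀ (D : Multiset X) (x : X), |f (x ::ₘ D) - f D| ≤ 1) (τ : ℝ)
    (D : Multiset X) (x : X) :
    noisyThresholdProb ε f τ D
        ≤ ENNReal.ofReal (Real.exp ε) * noisyThresholdProb ε f τ (x ::ₘ D) ∧
    1 - noisyThresholdProb ε f τ D
        ≤ ENNReal.ofReal (Real.exp ε) * (1 - noisyThresholdProb ε f τ (x ::ₘ D)) ∧
    noisyThresholdProb ε f τ (x ::ₘ D)
        ≤ ENNReal.ofReal (Real.exp ε) * noisyThresholdProb ε f τ D ∧
    1 - noisyThresholdProb ε f τ (x ::ₘ D)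
        ≤ ENNReal.ofReal (Real.exp ε) * (1 - noisyThresholdProb ε f τ D) := by
  obtain ⟨hpass, hfail⟩ := noisyThreshold_dp_of_abs_sub_le f τ hε (hf D x)
  obtain ⟨hpass', hfail'⟩ :=
    noisyThreshold_dp_of_abs_sub_le f τ hε (D := x ::ₘ D) (by rw [abs_sub_comm]; exact hf D x)
  exact ⟨hpass, hfail, hpass', hfail'⟩
end
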